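/- Suppose for some p ∈ [1,∞] that ‖exp(−Φ)/Z‖_{L^p(μ)} ≤ K with K < ∞. Then ‖π_Z − π_{Z̃}‖_tv ≤ (2K/C_Z) ‖Z/Z̃ − 1‖_{L^{p/(p−1)}(μ)}. -/

import Mathlib

open MeasureTheory Real

noncomputable section

/-- Normalizing constant `C_Z = ∫ exp(-Φ)/Z dμ`. -/
def CZ {Θ : Type*} [MeasurableSpace Θ] (μ : Measure Θ) (Φ Z : Θ → ℝ) : ℝ :=
  ∫ θ, Real.exp (-Φ θ) / Z θ ∂μ

/-- The doubly-intractable posterior `π_Z` with `μ`-density `exp(-Φ)/(Z C_Z)`. -/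
def post {Θ : Type*} [MeasurableSpace Θ] (μ : Measure Θ) (Φ Z : Θ → ℝ) : Measure Θ :=
  (ENNReal.ofReal (CZ μ Φ Z))⁻¹ •
    μ.withDensity (fun θ => ENNReal.ofReal (Real.exp (-Φ θ) / Z θ))

/-- Total variation distance `sup_{|f|_∞ ≤ 1} |E_{ν₁} f - E_{ν₂} f|`. -/
def tvDist {Θ : Type*} [MeasurableSpace Θ] (ν₁ ν₂ : Measure Θ) : ℝ :=
  ⨆ f : {f : Θ → ℝ // Measurable f ∧ ∀ θ, |f θ| ≤ 1},
    |(∫ θ, f.1 θ ∂ν₁) - ∫ θ, f.1 θ ∂ν₂|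

lemma integral_post {Θ : Type*} [MeasurableSpace Θ] (μ : Measure Θ) (Φ W : Θ → ℝ)
    (hΦ : Measurable Φ) (hW : Measurable W) (hWpos : ∀ θ, 0 < W θ) (hC : 0 ≤ CZ μ Φ W)
    (f : Θ → ℝ) :
    ∫ θ, f θ ∂(post μ Φ W) = (CZ μ Φ W)⁻¹ * ∫ θ, (Real.exp (-Φ θ) / W θ) * f θ ∂μ := by
  have hdm : Measurable fun θ => (Real.exp (-Φ θ) / W θ).toNNReal :=
    ((Real.measurable_exp.comp hΦ.neg).div hW).real_toNNReal
  rw [post, integral_smul_measure]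
  have h1 : (fun θ => ENNReal.ofReal (Real.exp (-Φ θ) / W θ))
      = fun θ => ((Real.toNNReal (Real.exp (-Φ θ) / W θ) : NNReal) : ENNReal) := rfl
  rw [h1, integral_withDensity_eq_integral_smul hdm f]
  rw [ENNReal.toReal_inv, ENNReal.toReal_ofReal hC, smul_eq_mul]
  congr 1
  refine integral_congr_ae (Filter.Eventually.of_forall fun θ => ?_)
  show (Real.exp (-Φ θ) / W θ).toNNReal • f θ = _
  rw [NNReal.smul_def, Real.coe_toNNReal _ (by have := hWpos θ; positivity), smul_eq_mul]

theorem tv_stability_Lp {Θ : Type*} [MeasurableSpace Θ] (μ : Measure Θ) [SigmaFinite μ]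
    (Φ Z Zt : Θ → ℝ) (hΦ : Measurable Φ) (hZ : Measurable Z) (hZt : Measurable Zt)
    (hZpos : ∀ θ, 0 < Z θ) (hZtpos : ∀ θ, 0 < Zt θ)
    (hint : Integrable (fun θ => Real.exp (-Φ θ) / Z θ) μ)
    (hintt : Integrable (fun θ => Real.exp (-Φ θ) / Zt θ) μ)
    (hC : 0 < CZ μ Φ Z) (hCt : 0 < CZ μ Φ Zt)
    (p q : ENNReal) (hp : 1 ≤ p) (hpq : 1 / p + 1 / q = 1)
    (K : ℝ) (hK : 0 ≤ K)
    (hKp : eLpNorm (fun θ => Real.exp (-Φ θ) / Z θ) p μ ≤ ENNReal.ofReal K) :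
    ENNReal.ofReal (tvDist (post μ Φ Z) (post μ Φ Zt)) ≤
      ENNReal.ofReal (2 * K / CZ μ Φ Z) * eLpNorm (fun θ => Z θ / Zt θ - 1) q μ := by
  have hpne : p ≠ 0 := (lt_of_lt_of_le zero_lt_one hp).ne'
  set g : Θ → ℝ := fun θ => Real.exp (-Φ θ) / Z θ with hgdef
  set gt : Θ → ℝ := fun θ => Real.exp (-Φ θ) / Zt θ with hgtdef
  set r : Θ → ℝ := fun θ => Z θ / Zt θ - 1 with hrdef
  have hgm : Measurable g := (Real.measurable_exp.comp hΦ.neg).div hZ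
  have hgtm : Measurable gt := (Real.measurable_exp.comp hΦ.neg).div hZt
  have hrm : Measurable r := (hZ.div hZt).sub measurable_const
  have habs : ∀ h : Θ → ℝ, |∫ θ, h θ ∂μ| ≤ ∫ θ, |h θ| ∂μ := fun h => by
    simpa [Real.norm_eq_abs] using norm_integral_le_integral_norm (μ := μ) h
  have hgnn : ∀ θ, 0 ≤ g θ := fun θ => by
    have := hZpos θ; simp only [hgdef]; positivity
  have hgtnn : ∀ θ, 0 ≤ gt θ := fun θ => by
    have := hZtpos θ; simp only [hgtdef]; positivity
  have hptw : ∀ θ, g θ * r θ = gt θ - g θ := by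
    intro θ
    have h1 : Z θ ≠ 0 := (hZpos θ).ne'
    have h2 : Zt θ ≠ 0 := (hZtpos θ).ne'
    simp only [hgdef, hgtdef, hrdef]
    field_simp
  have hHolder : eLpNorm (fun θ => g θ * r θ) 1 μ ≤ ENNReal.ofReal K * eLpNorm r q μ := by
    refine le_trans (eLpNorm_le_eLpNorm_mul_eLpNorm'_of_norm (hpqr := ?_) hgm.aestronglyMeasurable
      hrm.aestronglyMeasurable (· * ·) 1 (Filter.Eventually.of_forall fun θ => by
        simp [Real.norm_eq_abs, abs_mul])) (by rw [ENNReal.coe_one, one_mul]; exact mul_le_mul_left hKp _)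
    refine ⟨?_⟩
    simpa [one_div] using hpq
  have hCZg : CZ μ Φ Z = ∫ θ, g θ ∂μ := rfl
  have hCZgt : CZ μ Φ Zt = ∫ θ, gt θ ∂μ := rfl
  have hKpos : 0 < K := by
    rcases hK.lt_or_eq with h | h
    · exact h
    exfalso
    have h0 : eLpNorm g p μ = 0 := by
      refine le_antisymm ?_ (zero_le)
      simpa [← h] using hKp
    have hae : g =ᵐ[μ] 0 := (eLpNorm_eq_zero_iff hgm.aestronglyMeasurable hpne).mp h0
    have hz : CZ μ Φ Z = 0 := by rw [hCZg]; exact integral_eq_zero_of_ae hae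
    linarith
  by_cases htop : eLpNorm r q μ = ⊤
  · rw [htop, ENNReal.mul_top (by
      simp only [ne_eq, ENNReal.ofReal_eq_zero, not_le]
      exact div_pos (by linarith) hC)]
    exact le_top
  set B := (eLpNorm r q μ).toReal with hBdef
  have hBnn : 0 ≤ B := ENNReal.toReal_nonneg
  have hBeq : eLpNorm r q μ = ENNReal.ofReal B := (ENNReal.ofReal_toReal htop).symm
  have hsubint : Integrable (fun θ => gt θ - g θ) μ := hintt.sub hint
  have hkey : ∫ θ, |gt θ - g θ| ∂μ ≤ K * B := by
    have h1 : ENNReal.ofReal (∫ θ, |gt θ - g θ| ∂μ) = eLpNorm (fun θ => gt θ - g θ) 1 μ := by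
      rw [eLpNorm_one_eq_lintegral_enorm,
        ← ofReal_integral_norm_eq_lintegral_enorm hsubint]
      simp [Real.norm_eq_abs]
    have h2 : eLpNorm (fun θ => gt θ - g θ) 1 μ ≤ ENNReal.ofReal (K * B) := by
      have heq : (fun θ => gt θ - g θ) = fun θ => g θ * r θ := by
        funext θ; rw [hptw θ]
      rw [heq]
      calc eLpNorm (fun θ => g θ * r θ) 1 μ ≤ ENNReal.ofReal K * eLpNorm r q μ := hHolder
        _ = ENNReal.ofReal K * ENNReal.ofReal B := by rw [hBeq]
        _ = ENNReal.ofReal (K * B) := (ENNReal.ofReal_mul hK).symm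
    rw [← ENNReal.ofReal_le_ofReal_iff (mul_nonneg hK hBnn), h1]
    exact h2
  have hbound : ∀ f : Θ → ℝ, Measurable f → (∀ θ, |f θ| ≤ 1) →
      |(∫ θ, f θ ∂(post μ Φ Z)) - ∫ θ, f θ ∂(post μ Φ Zt)| ≤ 2 * K / CZ μ Φ Z * B := by
    intro f hfm hfb
    rw [integral_post μ Φ Z hΦ hZ hZpos hC.le f,
        integral_post μ Φ Zt hΦ hZt hZtpos hCt.le f]
    show |(CZ μ Φ Z)⁻¹ * ∫ θ, g θ * f θ ∂μ - (CZ μ Φ Zt)⁻¹ * ∫ θ, gt θ * f θ ∂μ| ≤ _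
    set I1 := ∫ θ, g θ * f θ ∂μ with hI1def
    set I2 := ∫ θ, gt θ * f θ ∂μ with hI2def
    have hfbdd : ∃ c, ∀ θ, ‖f θ‖ ≤ c := ⟨1, fun θ => by
      simpa [Real.norm_eq_abs] using hfb θ⟩
    have hint1 : Integrable (fun θ => g θ * f θ) μ := by
      simpa [mul_comm] using Integrable.bdd_mul hint hfm.aestronglyMeasurable (Filter.Eventually.of_forall hfbdd.choose_spec)
    have hint2 : Integrable (fun θ => gt θ * f θ) μ := by
      simpa [mul_comm] using Integrable.bdd_mul hintt hfm.aestronglyMeasurable (Filter.Eventually.of_forall hfbdd.choose_spec)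
    have hdiff : |I1 - I2| ≤ K * B := by
      have heq : I1 - I2 = ∫ θ, (g θ - gt θ) * f θ ∂μ := by
        rw [hI1def, hI2def, ← integral_sub hint1 hint2]
        congr 1; funext θ; ring
      rw [heq]
      refine (habs _).trans (le_trans (integral_mono ?_ hsubint.abs ?_) hkey)
      · have : Integrable (fun θ => (g θ - gt θ) * f θ) μ := by
          exact (hint1.sub hint2).congr (Filter.Eventually.of_forall fun θ => by simp [sub_mul])
        exact this.abs
      · intro θ
        show |(g θ - gt θ) * f θ| ≤ |gt θ - g θ|
        rw [abs_mul, abs_sub_comm]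
        exact mul_le_of_le_one_right (abs_nonneg _) (hfb θ)
    have hI2b : |I2| ≤ CZ μ Φ Zt := by
      rw [hCZgt]
      refine (habs _).trans (integral_mono hint2.abs hintt ?_)
      intro θ
      show |gt θ * f θ| ≤ gt θ
      rw [abs_mul, abs_of_nonneg (hgtnn θ)]
      exact mul_le_of_le_one_right (hgtnn θ) (hfb θ)
    have hCsub : |CZ μ Φ Zt - CZ μ Φ Z| ≤ K * B := by
      rw [hCZgt, hCZg, ← integral_sub hintt hint]
      exact (habs _).trans hkey
    have hCne : CZ μ Φ Z ≠ 0 := hC.ne'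
    have hCtne : CZ μ Φ Zt ≠ 0 := hCt.ne'
    have keyeq : (CZ μ Φ Z)⁻¹ * I1 - (CZ μ Φ Zt)⁻¹ * I2
        = (CZ μ Φ Z)⁻¹ * (I1 - I2)
          + ((CZ μ Φ Zt - CZ μ Φ Z) / (CZ μ Φ Z * CZ μ Φ Zt)) * I2 := by
      field_simp
      ring
    rw [keyeq]
    have t1 : |(CZ μ Φ Z)⁻¹ * (I1 - I2)| ≤ K * B / CZ μ Φ Z := by
      rw [abs_mul, abs_of_pos (inv_pos.mpr hC), inv_mul_eq_div, div_le_div_iff₀ hC hC]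
      nlinarith [hdiff]
    have t2 : |((CZ μ Φ Zt - CZ μ Φ Z) / (CZ μ Φ Z * CZ μ Φ Zt)) * I2| ≤ K * B / CZ μ Φ Z := by
      rw [abs_mul, abs_div, abs_of_pos (mul_pos hC hCt)]
      rw [div_mul_eq_mul_div, div_le_div_iff₀ (mul_pos hC hCt) hC]
      have h1 : |CZ μ Φ Zt - CZ μ Φ Z| * |I2| ≤ (K * B) * CZ μ Φ Zt :=
        mul_le_mul hCsub hI2b (abs_nonneg _) (mul_nonneg hKpos.le hBnn)
      nlinarith [h1]
    calc |(CZ μ Φ Z)⁻¹ * (I1 - I2)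
          + ((CZ μ Φ Zt - CZ μ Φ Z) / (CZ μ Φ Z * CZ μ Φ Zt)) * I2|
        ≤ |(CZ μ Φ Z)⁻¹ * (I1 - I2)|
          + |((CZ μ Φ Zt - CZ μ Φ Z) / (CZ μ Φ Z * CZ μ Φ Zt)) * I2| := abs_add_le _ _
      _ ≤ K * B / CZ μ Φ Z + K * B / CZ μ Φ Z := add_le_add t1 t2
      _ = 2 * K / CZ μ Φ Z * B := by ring
  rw [hBeq, ← ENNReal.ofReal_mul (div_nonneg (by linarith) hC.le)]
  refine ENNReal.ofReal_le_ofReal ?_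
  rw [tvDist]
  exact Real.iSup_le (fun f => hbound f.1 f.2.1 f.2.2)
    (mul_nonneg (div_nonneg (by linarith) hC.le) hBnn)
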